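/- Failure of strong Rayleigh for ⌊2X/3⌋: Let n ≥ 2, let X ~ Bin(3n, 1/2), and let z_1, ..., z_d be the complex roots of the probability generating function of ⌊2X/3⌋. Then max_i Im(z_i) ≥ sqrt((9n² − 9n − 1)/2), where Im(z) denotes the imaginary part of z. -/

import Mathlib

/-!
The probability generating function `p` of `⌊2X/3⌋` has degree `2n` and top coefficients
`2^{-3n} (1, 3n, C(3n+1, 3))`. By Vieta its roots satisfy `∑ zᵢ = -3n` and
`e₂(z) = C(3n+1, 3)`, so `∑ zᵢ² = 9n² - 2 C(3n+1, 3) = -n (9n² - 9n - 1)`. Since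
`Re (z²) ≥ -(Im z)²`, this gives `∑ (Im zᵢ)² ≥ n (9n² - 9n - 1)`, so one of the `2n` roots has
`(Im z)² ≥ (9n² - 9n - 1)/2`. As `p` has real coefficients, that root or its conjugate has
`Im z ≥ √((9n² - 9n - 1)/2)`.
-/

open scoped BigOperators

/-- The binomial probability mass function `Bin(m, p)`. -/
noncomputable def binPMF (m : ℕ) (p : ℝ) (k : ℕ) : ℝ :=
  (m.choose k : ℝ) * p ^ k * (1 - p) ^ (m - k)

/-- The pmf of `⌊2X/3⌋` for `X ~ Bin(3n, 1/2)`: the value `j` receives the total mass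
of all `i` with `⌊2i/3⌋ = j`. -/
noncomputable def floorTwoThirdsPMF (n : ℕ) (j : ℕ) : ℝ :=
  ∑ i ∈ (Finset.range (3 * n + 1)).filter fun i => 2 * i / 3 = j,
    binPMF (3 * n) (1 / 2) i

open Polynomial ComplexConjugate

namespace Multiset

theorem esymm_one {R : Type*} [CommSemiring R] (s : Multiset R) : s.esymm 1 = s.sum := by
  simp [esymm, powersetCard_one]

theorem esymm_two_cons {R : Type*} [CommSemiring R] (a : R) (s : Multiset R) :
    (a ::ₘ s).esymm 2 = a * s.sum + s.esymm 2 := by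
  simp only [esymm, powersetCard_cons, Nat.reduceAdd, powersetCard_one, map_map,
    Function.comp_apply, Multiset.map_add, prod_cons, prod_singleton, add_comm, sum_add]
  rw [sum_map_mul_left, map_id']

theorem sq_sum_eq_sum_map_sq_add_two_mul_esymm_two {R : Type*} [CommSemiring R] (s : Multiset R) :
    s.sum ^ 2 = (s.map (· ^ 2)).sum + 2 * s.esymm 2 := by
  induction s using Multiset.induction with
  | empty => simp [esymm, powersetCard_zero_right]
  | cons a s ih => rw [sum_cons, map_cons, sum_cons, esymm_two_cons, add_sq, ih]; ring

theorem exists_mem_sum_map_le_card_mul {α R : Type*} [CommSemiring R] [LinearOrder R]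
    [IsOrderedRing R] {s : Multiset α} (hs : s ≠ 0) (f : α → R) :
    ∃ x ∈ s, (s.map f).sum ≤ card s * f x := by
  obtain ⟨x, hx, hmax⟩ := s.exists_max_image f hs
  refine ⟨x, hx, ?_⟩
  simpa [nsmul_eq_mul] using (s.map f).sum_le_card_nsmul (f x) (by simpa using hmax)

end Multiset

theorem Complex.neg_re_sum_map_sq_le_sum_map_im_sq (s : Multiset ℂ) :
    -(s.map (· ^ 2)).sum.re ≤ (s.map fun z => z.im ^ 2).sum := by
  rw [← Complex.coe_reAddGroupHom, map_multiset_sum, Multiset.map_map, ← Multiset.sum_map_neg]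
  refine Multiset.sum_map_le_sum_map _ _ fun z _ => ?_
  simp only [Function.comp_apply, Complex.coe_reAddGroupHom, sq, Complex.mul_re]
  nlinarith [mul_self_nonneg z.re]

namespace Polynomial

theorem leadingCoeff_sq_mul_sum_map_sq_roots {R : Type*} [CommRing R] [IsDomain R] {p : R[X]}
    (hroots : p.roots.card = p.natDegree) (hp : 2 ≤ p.natDegree) :
    p.leadingCoeff ^ 2 * (p.roots.map (· ^ 2)).sum =
      p.coeff (p.natDegree - 1) ^ 2 - 2 * p.leadingCoeff * p.coeff (p.natDegree - 2) := by
  have h₁ := coeff_eq_esymm_roots_of_card hroots (k := p.natDegree - 1) (by omega)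
  have h₂ := coeff_eq_esymm_roots_of_card hroots (k := p.natDegree - 2) (by omega)
  rw [Nat.sub_sub_self (by omega), Multiset.esymm_one] at h₁
  rw [Nat.sub_sub_self hp] at h₂
  rw [h₁, h₂]
  linear_combination
    -p.leadingCoeff ^ 2 * Multiset.sq_sum_eq_sum_map_sq_add_two_mul_esymm_two p.roots

theorem isRoot_map_conj {p : ℝ[X]} {z : ℂ} (hz : (p.map (algebraMap ℝ ℂ)).IsRoot z) :
    (p.map (algebraMap ℝ ℂ)).IsRoot (conj z) := by
  rw [IsRoot.def, eval_map_algebraMap] at hz ⊢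
  rw [← Complex.conjAe_coe, aeval_algHom_apply, hz, map_zero]

theorem exists_isRoot_map_sqrt_le_im_of_le_im_sq {p : ℝ[X]} {z : ℂ} {a : ℝ}
    (hz : (p.map (algebraMap ℝ ℂ)).IsRoot z) (ha : a ≤ z.im ^ 2) :
    ∃ w : ℂ, (p.map (algebraMap ℝ ℂ)).IsRoot w ∧ √a ≤ w.im := by
  have hle : √a ≤ |z.im| := Real.sqrt_le_sqrt ha |>.trans_eq (Real.sqrt_sq_eq_abs _)
  rcases abs_cases z.im with ⟨habs, -⟩ | ⟨habs, -⟩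
  · exact ⟨z, hz, habs ▸ hle⟩
  · exact ⟨conj z, isRoot_map_conj hz, by rwa [Complex.conj_im, ← habs]⟩

theorem exists_isRoot_map_sqrt_le_im (p : ℝ[X]) (hp : 2 ≤ p.natDegree) :
    ∃ z : ℂ, (p.map (algebraMap ℝ ℂ)).IsRoot z ∧
      √((2 * p.leadingCoeff * p.coeff (p.natDegree - 2) - p.coeff (p.natDegree - 1) ^ 2) /
        (p.natDegree * p.leadingCoeff ^ 2)) ≤ z.im := by
  set P := p.map (algebraMap ℝ ℂ)
  have hdeg : P.natDegree = p.natDegree := natDegree_map _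
  have hcard : P.roots.card = p.natDegree := IsAlgClosed.card_roots_eq_natDegree.trans hdeg
  have hvieta : p.leadingCoeff ^ 2 * (P.roots.map (· ^ 2)).sum.re =
      p.coeff (p.natDegree - 1) ^ 2 - 2 * p.leadingCoeff * p.coeff (p.natDegree - 2) := by
    have h := leadingCoeff_sq_mul_sum_map_sq_roots (hcard.trans hdeg.symm) (hdeg ▸ hp)
    rw [leadingCoeff_map, hdeg, coeff_map, coeff_map] at h
    simpa [← Complex.ofReal_pow, Complex.re_ofReal_mul] using congrArg Complex.re h
  obtain ⟨z, hz, hmax⟩ := Multiset.exists_mem_sum_map_le_card_mul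
    (Multiset.card_pos.mp (hcard ▸ by omega : 0 < P.roots.card)) fun z => z.im ^ 2
  have hlc : 0 < p.leadingCoeff ^ 2 := by
    have : p.leadingCoeff ≠ 0 := leadingCoeff_ne_zero.mpr (by rintro rfl; simp at hp)
    positivity
  refine exists_isRoot_map_sqrt_le_im_of_le_im_sq (isRoot_of_mem_roots hz) ?_
  rw [div_le_iff₀ (by positivity)]
  rw [hcard] at hmax
  nlinarith [Complex.neg_re_sum_map_sq_le_sum_map_im_sq P.roots]

end Polynomial

theorem binPMF_one_half (m i : ℕ) : binPMF m (1 / 2) i = m.choose i / 2 ^ m := by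
  rcases le_or_gt i m with hi | hi
  · rw [binPMF, show (1 - 1 / 2 : ℝ) = 1 / 2 by norm_num, mul_assoc, ← pow_add,
      Nat.add_sub_cancel' hi, one_div_pow, mul_one_div]
  · simp [binPMF, Nat.choose_eq_zero_of_lt hi]

theorem floorTwoThirdsPMF_eq_sum_choose {n j : ℕ} {s : Finset ℕ}
    (hs : ∀ i, i ∈ s ↔ 2 * i / 3 = j) :
    floorTwoThirdsPMF n j = ∑ i ∈ s, ((3 * n).choose i : ℝ) / 2 ^ (3 * n) := by
  simp only [floorTwoThirdsPMF, binPMF_one_half]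
  refine Finset.sum_subset (fun i hi => (hs i).2 (Finset.mem_filter.1 hi).2) fun i hi hi' => ?_
  have : 3 * n < i := by simp_all
  simp [Nat.choose_eq_zero_of_lt this]

theorem floorTwoThirdsPMF_two_mul (n k : ℕ) :
    floorTwoThirdsPMF n (2 * k) = (3 * n + 1).choose (3 * k + 1) / 2 ^ (3 * n) := by
  rw [floorTwoThirdsPMF_eq_sum_choose (s := {3 * k, 3 * k + 1}) (fun i => by simp; omega),
    Finset.sum_pair (by omega), ← add_div, ← Nat.cast_add, Nat.choose_succ_succ']

theorem floorTwoThirdsPMF_two_mul_add_one (n k : ℕ) :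
    floorTwoThirdsPMF n (2 * k + 1) = (3 * n).choose (3 * k + 2) / 2 ^ (3 * n) := by
  rw [floorTwoThirdsPMF_eq_sum_choose (s := {3 * k + 2}) (fun i => by simp; omega),
    Finset.sum_singleton]

theorem floorTwoThirdsPMF_two_mul_self (n : ℕ) :
    floorTwoThirdsPMF n (2 * n) = 1 / 2 ^ (3 * n) := by
  rw [floorTwoThirdsPMF_two_mul, Nat.choose_self, Nat.cast_one]

theorem floorTwoThirdsPMF_succ_two_mul_add_one (m : ℕ) :
    floorTwoThirdsPMF (m + 1) (2 * m + 1) = (3 * m + 3) / 2 ^ (3 * (m + 1)) := by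
  rw [floorTwoThirdsPMF_two_mul_add_one, show 3 * (m + 1) = 3 * m + 2 + 1 by ring,
    Nat.choose_succ_self_right]
  push_cast
  ring

theorem floorTwoThirdsPMF_succ_two_mul (m : ℕ) :
    floorTwoThirdsPMF (m + 1) (2 * m) =
      (3 * m + 4) * (3 * m + 3) * (3 * m + 2) / 6 / 2 ^ (3 * (m + 1)) := by
  have hchoose : 6 * (3 * m + 4).choose 3 = (3 * m + 4) * (3 * m + 3) * (3 * m + 2) := by
    rw [show 6 = Nat.factorial 3 from rfl, ← Nat.descFactorial_eq_factorial_mul_choose]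
    simp only [Nat.descFactorial, Nat.reduceSubDiff, Nat.add_one_sub_one, tsub_zero, mul_one]
    ring
  rw [floorTwoThirdsPMF_two_mul, show 3 * (m + 1) + 1 = 3 * m + 4 by ring,
    Nat.choose_symm_of_eq_add (show 3 * m + 4 = 3 * m + 1 + 3 by ring)]
  congr 1
  rw [eq_div_iff (by norm_num), mul_comm]
  exact_mod_cast hchoose

noncomputable def floorTwoThirdsPGF (n : ℕ) : ℝ[X] :=
  ∑ j ∈ Finset.range (2 * n + 1), C (floorTwoThirdsPMF n j) * X ^ j

theorem coeff_floorTwoThirdsPGF {n k : ℕ} (hk : k ≤ 2 * n) :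
    (floorTwoThirdsPGF n).coeff k = floorTwoThirdsPMF n k := by
  simp [floorTwoThirdsPGF, Nat.lt_succ_of_le hk]

theorem natDegree_floorTwoThirdsPGF (n : ℕ) : (floorTwoThirdsPGF n).natDegree = 2 * n := by
  refine natDegree_eq_of_le_of_coeff_ne_zero ?_ ?_
  · refine natDegree_sum_le_of_forall_le _ _ fun j hj => (natDegree_C_mul_X_pow_le _ _).trans ?_
    exact Nat.lt_succ_iff.mp (Finset.mem_range.mp hj)
  · rw [coeff_floorTwoThirdsPGF le_rfl, floorTwoThirdsPMF_two_mul_self]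
    positivity

/-- Failure of strong Rayleigh for `⌊2X/3⌋`: if `n ≥ 2`, `X ~ Bin(3n, 1/2)` and
`z_1, ..., z_d` are the complex roots of the probability generating function of
`⌊2X/3⌋`, then `max_i Im(z_i) ≥ sqrt((9n² - 9n - 1)/2)`. -/
theorem floor_two_thirds_large_imaginary_root (n : ℕ) (hn : 2 ≤ n)
    (P : Polynomial ℂ)
    (hP : P = ∑ j ∈ Finset.range (2 * n + 1),
      Polynomial.C ((floorTwoThirdsPMF n j : ℝ) : ℂ) * Polynomial.X ^ j) :
    ∃ z : ℂ, P.IsRoot z ∧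
      Real.sqrt ((9 * (n : ℝ) ^ 2 - 9 * n - 1) / 2) ≤ z.im := by
  obtain ⟨m, rfl⟩ : ∃ m, n = m + 1 := ⟨n - 1, by omega⟩
  have hPp : P = (floorTwoThirdsPGF (m + 1)).map (algebraMap ℝ ℂ) := by
    simp [hP, floorTwoThirdsPGF, Polynomial.map_sum]
  have hdeg := natDegree_floorTwoThirdsPGF (m + 1)
  obtain ⟨z, hz, hle⟩ := exists_isRoot_map_sqrt_le_im (floorTwoThirdsPGF (m + 1)) (by omega)
  refine ⟨z, hPp ▸ hz, le_of_eq_of_le ?_ hle⟩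
  rw [leadingCoeff, hdeg, show 2 * (m + 1) - 1 = 2 * m + 1 by omega,
    show 2 * (m + 1) - 2 = 2 * m by omega, coeff_floorTwoThirdsPGF le_rfl,
    coeff_floorTwoThirdsPGF (by omega), coeff_floorTwoThirdsPGF (by omega),
    floorTwoThirdsPMF_two_mul_self, floorTwoThirdsPMF_succ_two_mul_add_one,
    floorTwoThirdsPMF_succ_two_mul]
  congr 1
  field_simp
  push_cast
  ring
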